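/- For every strict linear order ≻ on 2^𝒪, the rule f^≻ on the universal domain 𝒰_𝒪 defined by f^≻(P_N) = max_≻ {t(P_i) : i ∈ N} (the best-positioned top set of the profile according to ≻) satisfies ontoness, tops-onliness, false-name-proofness, and participation, but violates object neutrality. -/

import Mathlib

/-! ## Basic framework: preferences, profiles, voting rules, axioms -/

/-- A preference is a strict linear order on the set `A` of alternatives, encoded as a
`LinearOrder` structure on `A`; alternative `x` is strictly preferred to `y` iff `y < x`
(i.e. "greater is better"). -/
abbrev Pref (A : Type*) := LinearOrder A

/-- Strict preference: `x` is strictly preferred to `y` under `p`. -/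
def Pref.pref {A : Type*} (p : Pref A) (x y : A) : Prop := p.lt y x

/-- Weak preference (the weak counterpart `R` of the strict preference `P`):
`x` is weakly preferred to `y` under `p`. -/
def Pref.wpref {A : Type*} (p : Pref A) (x y : A) : Prop := p.le y x

/-- The top (most preferred) alternative of a preference. -/
noncomputable def Pref.top {A : Type*} [Fintype A] [Nonempty A] (p : Pref A) : A :=
  @Finset.max' A p Finset.univ Finset.univ_nonempty

/-- The bottom (least preferred) alternative of a preference. -/
noncomputable def Pref.bot {A : Type*} [Fintype A] [Nonempty A] (p : Pref A) : A :=
  @Finset.min' A p Finset.univ Finset.univ_nonempty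

/-- A profile over the society `N` (a finite set of voters, indexed by naturals):
it assigns a preference to each member of `N`. -/
abbrev Profile (A : Type*) (N : Finset ℕ) := (i : ℕ) → i ∈ N → Pref A

/-- The profile `P` takes values in the domain `D` of preferences. -/
def Profile.inDomain {A : Type*} {N : Finset ℕ} (P : Profile A N) (D : Set (Pref A)) : Prop :=
  ∀ i (hi : i ∈ N), P i hi ∈ D

/-- A (variable-population) voting rule: it assigns an alternative to every society
together with a profile over it. -/
abbrev Rule (A : Type*) := (N : Finset ℕ) → Profile A N → A

/-- Ontoness on the domain `D`: for every society and every alternative, some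
`D`-profile realizes that alternative. -/
def OntoOn {A : Type*} (D : Set (Pref A)) (f : Rule A) : Prop :=
  ∀ N : Finset ℕ, N.Nonempty → ∀ a : A, ∃ P : Profile A N, P.inDomain D ∧ f N P = a

/-- Tops-onliness on the domain `D`: two `D`-profiles with the same tops get the
same outcome. -/
def TopsOnlyOn {A : Type*} [Fintype A] [Nonempty A] (D : Set (Pref A)) (f : Rule A) : Prop :=
  ∀ N : Finset ℕ, N.Nonempty → ∀ P P' : Profile A N, P.inDomain D → P'.inDomain D →
    (∀ i (hi : i ∈ N), (P i hi).top = (P' i hi).top) → f N P = f N P'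

/-- False-name-proofness on the domain `D`: if a voter `i` of the society `N` casts,
under fresh identities `N'`, extra votes identical to her own preference, the outcome
does not improve for her. -/
def FalseNameProofOn {A : Type*} (D : Set (Pref A)) (f : Rule A) : Prop :=
  ∀ N N' : Finset ℕ, N.Nonempty → N'.Nonempty → Disjoint N N' →
    ∀ P : Profile A (N ∪ N'), P.inDomain D →
      ∀ i (hi : i ∈ N),
        (∀ j (hj : j ∈ N'),
            P j (Finset.mem_union_right N hj) = P i (Finset.mem_union_left N' hi)) →
        (P i (Finset.mem_union_left N' hi)).wpref
          (f N (fun j hj => P j (Finset.mem_union_left N' hj)))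
          (f (N ∪ N') P)

/-- Participation on the domain `D`: no voter gains by abstaining. -/
def ParticipationOn {A : Type*} (D : Set (Pref A)) (f : Rule A) : Prop :=
  ∀ N : Finset ℕ, 2 ≤ N.card → ∀ P : Profile A N, P.inDomain D →
    ∀ i (hi : i ∈ N),
      (P i hi).wpref (f N P) (f (N.erase i) (fun j hj => P j (Finset.mem_of_mem_erase hj)))

lemma mem_of_mem_image_perm {σ : Equiv.Perm ℕ} {N : Finset ℕ} {j : ℕ}
    (hj : j ∈ N.image σ) : σ.symm j ∈ N := by
  obtain ⟨i, hi, rfl⟩ := Finset.mem_image.mp hj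
  simpa using hi

/-- The permuted profile `σ(P_N)` over the society `σ(N)`: voter `σ i` gets the
preference `P i`. -/
def permProfile {A : Type*} (σ : Equiv.Perm ℕ) {N : Finset ℕ} (P : Profile A N) :
    Profile A (N.image σ) :=
  fun j hj => P (σ.symm j) (mem_of_mem_image_perm hj)

/-- Anonymity on the domain `D`: permuting the voters' identities does not change
the outcome. -/
def AnonymousOn {A : Type*} (D : Set (Pref A)) (f : Rule A) : Prop :=
  ∀ (σ : Equiv.Perm ℕ) (N : Finset ℕ), N.Nonempty → ∀ P : Profile A N, P.inDomain D →
    f (N.image σ) (permProfile σ P) = f N P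

/-- Relabeling a preference along a permutation `γ` of the alternatives: in the new
preference, `γ x` is strictly preferred to `γ y` iff `x` was strictly preferred to `y`. -/
noncomputable def Pref.relabel {A : Type*} (p : Pref A) (γ : Equiv.Perm A) : Pref A :=
  @LinearOrder.lift' A A p γ.symm γ.symm.injective

/-- Neutrality on the domain `D`: relabeling the alternatives by a permutation `γ`
relabels the outcome accordingly. -/
def NeutralOn {A : Type*} (D : Set (Pref A)) (f : Rule A) : Prop :=
  ∀ (γ : Equiv.Perm A) (N : Finset ℕ), N.Nonempty → ∀ P : Profile A N, P.inDomain D →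
    γ (f N P) = f N (fun i hi => (P i hi).relabel γ)

/-! ## The domain of preferences over subsets of a set `O` of objects -/

/-- Object neutrality: permuting the objects by `μ` (which permutes every subset of
objects pointwise) relabels the outcome accordingly. -/
def ObjectNeutralOn {O : Type*} [Fintype O] [DecidableEq O]
    (D : Set (Pref (Finset O))) (f : Rule (Finset O)) : Prop :=
  ∀ (μ : Equiv.Perm O) (N : Finset ℕ), N.Nonempty →
    ∀ P : Profile (Finset O) N, P.inDomain D →
      (f N P).image μ = f N (fun i hi => (P i hi).relabel μ.finsetCongr)

/-- A preference over subsets of objects is separable if adding an object `x ∉ S` to a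
set `S` improves the set exactly when `{x}` is preferred to `∅`. -/
def Separable {O : Type*} [Fintype O] [DecidableEq O] (p : Pref (Finset O)) : Prop :=
  ∀ (S : Finset O) (x : O), x ∉ S → (p.pref (insert x S) S ↔ p.pref {x} (∅ : Finset O))

/-- The domain of separable preferences over subsets of objects. -/
def SepDom (O : Type*) [Fintype O] [DecidableEq O] : Set (Pref (Finset O)) :=
  {p | Separable p}

/-- `t(P_N)`: the set of distinct top sets of the profile `P`. -/
noncomputable def distinctTops {O : Type*} [Fintype O] [DecidableEq O] {N : Finset ℕ}
    (P : Profile (Finset O) N) : Finset (Finset O) :=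
  N.attach.image fun i => (P i.1 i.2).top

/-- The rule `f^>`: an object is chosen iff it belongs to strictly more than half of the
distinct top sets of the profile. -/
noncomputable def fGt (O : Type*) [Fintype O] [DecidableEq O] : Rule (Finset O) :=
  fun N P =>
    Finset.univ.filter fun x =>
      (distinctTops P).card < 2 * ((distinctTops P).filter fun T => x ∈ T).card

/-- The rule `f^≥`: an object is chosen iff it belongs to at least half of the
distinct top sets of the profile. -/
noncomputable def fGe (O : Type*) [Fintype O] [DecidableEq O] : Rule (Finset O) :=
  fun N P =>
    Finset.univ.filter fun x =>
      (distinctTops P).card ≤ 2 * ((distinctTops P).filter fun T => x ∈ T).card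

/-- `g` is the tops-only extension to the domain `Dbig` (⊇ separable preferences) of the
tops-only rule `f` defined on the separable domain: on every `Dbig`-profile `P`, `g`
agrees with the value of `f` at any separable profile `Q` having the same tops as `P`. -/
def IsTopsOnlyExtensionOn {O : Type*} [Fintype O] [DecidableEq O]
    (Dbig : Set (Pref (Finset O))) (f g : Rule (Finset O)) : Prop :=
  ∀ N : Finset ℕ, N.Nonempty →
    ∀ P : Profile (Finset O) N, P.inDomain Dbig →
      ∀ Q : Profile (Finset O) N, Q.inDomain (SepDom O) →
        (∀ i (hi : i ∈ N), (P i hi).top = (Q i hi).top) → g N P = f N Q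

/-- The rule `f^≻` associated with a strict linear order `r` on `2^𝒪`: it selects the
best-positioned (according to `r`) top set of the profile. -/
noncomputable def fBest {O : Type*} [Fintype O] [DecidableEq O]
    (r : Pref (Finset O)) : Rule (Finset O) :=
  fun N P =>
    if h : N.Nonempty then
      @Finset.max' _ r (distinctTops P)
        ⟨(P h.choose h.choose_spec).top,
          Finset.mem_image_of_mem _ (Finset.mem_attach _ ⟨h.choose, h.choose_spec⟩)⟩
    else (∅ : Finset O)

/-! `f^≻` depends on a profile only through its set of distinct tops, of which it takes the
`≻`-maximum. Tops-onliness is then immediate, and false-name-proofness holds with equality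
since clones add no new top. When voter `i` abstains, either the old winner was `i`'s own top,
which `i` weakly prefers to anything, or it is still a top of the smaller society and, being the
maximum of a superset, still wins. For object neutrality take two voters with tops `{a}` and
`{b}`: swapping `a` and `b` fixes the set of tops, hence the outcome, yet moves both `{a}` and
`{b}`. -/

theorem Finset.max'_eq_max'_of_subset {α : Type*} [LinearOrder α] {s t : Finset α}
    (hs : s.Nonempty) (hst : s ⊆ t) (hmem : t.max' (hs.mono hst) ∈ s) :
    s.max' hs = t.max' (hs.mono hst) :=
  le_antisymm (Finset.max'_subset hs hst) (s.le_max' _ hmem)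

namespace Pref

variable {A : Type*} [Fintype A] [Nonempty A]

theorem le_top (p : Pref A) (x : A) : p.le x p.top :=
  @Finset.le_max' A p _ _ (Finset.mem_univ x)

theorem top_relabel (p : Pref A) (γ : Equiv.Perm A) : (p.relabel γ).top = γ p.top :=
  (p.relabel γ).le_antisymm _ _
    (show p.le (γ.symm (p.relabel γ).top) (γ.symm (γ p.top)) by simpa using p.le_top _)
    ((p.relabel γ).le_top _)

noncomputable def withTop (p : Pref A) (a : A) : Pref A :=
  p.relabel (Equiv.swap p.top a)

theorem top_withTop (p : Pref A) (a : A) : (p.withTop a).top = a := by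
  rw [withTop, top_relabel, Equiv.swap_apply_left]

end Pref

section DistinctTops

variable {O : Type*} [Fintype O] [DecidableEq O]

theorem mem_distinctTops {N : Finset ℕ} {P : Profile (Finset O) N} {T : Finset O} :
    T ∈ distinctTops P ↔ ∃ i, ∃ hi : i ∈ N, (P i hi).top = T := by
  simp only [distinctTops, Finset.mem_image, Finset.mem_attach, true_and, Subtype.exists]

theorem distinctTops_nonempty {N : Finset ℕ} (hN : N.Nonempty) (P : Profile (Finset O) N) :
    (distinctTops P).Nonempty :=
  ⟨(P hN.choose hN.choose_spec).top, mem_distinctTops.2 ⟨_, _, rfl⟩⟩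

theorem distinctTops_congr {N : Finset ℕ} {P Q : Profile (Finset O) N}
    (h : ∀ i (hi : i ∈ N), (P i hi).top = (Q i hi).top) : distinctTops P = distinctTops Q :=
  Finset.image_congr fun i _ => h i.1 i.2

theorem distinctTops_withTop (p : Pref (Finset O)) (N : Finset ℕ) (t : ℕ → Finset O) :
    distinctTops (fun i (_ : i ∈ N) => p.withTop (t i)) = N.image t := by
  ext T
  simp [mem_distinctTops, Pref.top_withTop]

theorem distinctTops_relabel {N : Finset ℕ} (P : Profile (Finset O) N)
    (γ : Equiv.Perm (Finset O)) :
    distinctTops (fun i hi => (P i hi).relabel γ) = (distinctTops P).image γ := by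
  simp only [distinctTops, Finset.image_image, Function.comp_def, Pref.top_relabel]

theorem distinctTops_restrict_subset {M N : Finset ℕ} (hMN : M ⊆ N) (P : Profile (Finset O) N) :
    distinctTops (fun i hi => P i (hMN hi)) ⊆ distinctTops P := by
  intro T hT
  obtain ⟨i, hi, rfl⟩ := mem_distinctTops.1 hT
  exact mem_distinctTops.2 ⟨i, hMN hi, rfl⟩

end DistinctTops

section FBest

variable {O : Type*} [Fintype O] [DecidableEq O] (r : Pref (Finset O))

theorem fBest_eq_max' {N : Finset ℕ} (hN : N.Nonempty) (P : Profile (Finset O) N) :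
    fBest r N P = @Finset.max' _ r (distinctTops P) (distinctTops_nonempty hN P) := by
  rw [fBest, dif_pos hN]

theorem fBest_mem_distinctTops {N : Finset ℕ} (hN : N.Nonempty) (P : Profile (Finset O) N) :
    fBest r N P ∈ distinctTops P := by
  rw [fBest_eq_max' r hN]
  exact @Finset.max'_mem _ r _ _

theorem fBest_congr {N M : Finset ℕ} (hN : N.Nonempty) (hM : M.Nonempty)
    {P : Profile (Finset O) N} {Q : Profile (Finset O) M}
    (h : distinctTops P = distinctTops Q) : fBest r N P = fBest r M Q := by
  rw [fBest_eq_max' r hN, fBest_eq_max' r hM]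
  congr 1

theorem fBest_restrict_eq {M N : Finset ℕ} (hM : M.Nonempty) (hMN : M ⊆ N)
    (P : Profile (Finset O) N) (hmem : fBest r N P ∈ distinctTops (fun i hi => P i (hMN hi))) :
    fBest r M (fun i hi => P i (hMN hi)) = fBest r N P := by
  rw [fBest_eq_max' r (hM.mono hMN)] at hmem ⊢
  rw [fBest_eq_max' r hM]
  exact @Finset.max'_eq_max'_of_subset _ r _ _ _ (distinctTops_restrict_subset hMN P) hmem

theorem fBest_erase_eq_or_eq_top {N : Finset ℕ} (P : Profile (Finset O) N) {i : ℕ}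
    (hi : i ∈ N) (hN : (N.erase i).Nonempty) :
    fBest r N P = (P i hi).top ∨
      fBest r (N.erase i) (fun j hj => P j (Finset.mem_of_mem_erase hj)) = fBest r N P := by
  obtain ⟨j, hj, hwin⟩ :=
    mem_distinctTops.1 (fBest_mem_distinctTops r (hN.mono (N.erase_subset i)) P)
  by_cases hji : j = i
  · subst hji
    exact Or.inl hwin.symm
  · exact Or.inr (fBest_restrict_eq r hN (N.erase_subset i) P
      (mem_distinctTops.2 ⟨j, Finset.mem_erase.2 ⟨hji, hj⟩, hwin⟩))

end FBest

section Axioms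

variable {O : Type*} [Fintype O] [DecidableEq O] (r : Pref (Finset O))

theorem fBest_ontoOn : OntoOn Set.univ (fBest r) := by
  intro N hN a
  refine ⟨fun i _ => r.withTop a, fun _ _ => trivial, ?_⟩
  have hwin := fBest_mem_distinctTops r hN fun i _ => r.withTop a
  rwa [distinctTops_withTop, Finset.image_const hN, Finset.mem_singleton] at hwin

theorem fBest_topsOnlyOn (D : Set (Pref (Finset O))) : TopsOnlyOn D (fBest r) :=
  fun _ hN _ _ _ _ htops => fBest_congr r hN hN (distinctTops_congr htops)

theorem fBest_falseNameProofOn (D : Set (Pref (Finset O))) : FalseNameProofOn D (fBest r) := by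
  intro N N' hN _ _ P _ i hi hclones
  have htops : distinctTops (fun j hj => P j (Finset.mem_union_left N' hj)) = distinctTops P := by
    refine (distinctTops_restrict_subset Finset.subset_union_left P).antisymm fun T hT => ?_
    obtain ⟨j, hj, rfl⟩ := mem_distinctTops.1 hT
    rcases Finset.mem_union.1 hj with hjN | hjN'
    · exact mem_distinctTops.2 ⟨j, hjN, rfl⟩
    · exact mem_distinctTops.2 ⟨i, hi, by rw [hclones j hjN']⟩
  rw [fBest_congr r hN (hN.mono Finset.subset_union_left) htops]
  exact (P i _).le_refl _

theorem fBest_participationOn (D : Set (Pref (Finset O))) : ParticipationOn D (fBest r) := by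
  intro N hcard P _ i hi
  have hN : (N.erase i).Nonempty := by
    rw [← Finset.card_pos, Finset.card_erase_of_mem hi]
    omega
  rcases fBest_erase_eq_or_eq_top r P hi hN with hwin | hwin
  · rw [Pref.wpref, hwin]
    exact (P i hi).le_top _
  · rw [Pref.wpref, hwin]
    exact (P i hi).le_refl _

theorem not_objectNeutralOn_fBest (hO : 2 ≤ Fintype.card O) :
    ¬ ObjectNeutralOn Set.univ (fBest r) := by
  intro hneutral
  obtain ⟨a, b, hab⟩ := Fintype.exists_pair_of_one_lt_card (α := O) hO
  let μ := Equiv.swap a b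
  let P : Profile (Finset O) {0, 1} := fun i _ => r.withTop (if i = 0 then {a} else {b})
  have hN : ({0, 1} : Finset ℕ).Nonempty := Finset.insert_nonempty _ _
  have htops : distinctTops P = {{a}, {b}} := by
    rw [distinctTops_withTop, Finset.image_insert, Finset.image_singleton]
    rfl
  have hfixed : (fBest r _ P).image μ = fBest r _ P := by
    rw [hneutral μ _ hN P fun _ _ => trivial]
    refine fBest_congr r hN hN ?_
    rw [distinctTops_relabel, htops]
    simp [μ, Finset.pair_comm]
  have hwin := fBest_mem_distinctTops r hN P
  rw [htops, Finset.mem_insert, Finset.mem_singleton] at hwin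
  rcases hwin with hwin | hwin <;> rw [hwin] at hfixed <;> simp [μ, hab, hab.symm] at hfixed

end Axioms

/-- For at least two objects and every strict linear order `r` on
`2^𝒪`, the rule `f^≻` satisfies ontoness, tops-onliness, false-name-proofness and
participation, but violates object neutrality. -/
theorem stmt_17 {O : Type*} [Fintype O] [DecidableEq O] (hO : 2 ≤ Fintype.card O)
    (r : Pref (Finset O)) :
    OntoOn Set.univ (fBest r) ∧ TopsOnlyOn Set.univ (fBest r) ∧
    FalseNameProofOn Set.univ (fBest r) ∧ ParticipationOn Set.univ (fBest r) ∧
    ¬ ObjectNeutralOn Set.univ (fBest r) :=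
  ⟨fBest_ontoOn r, fBest_topsOnlyOn r _, fBest_falseNameProofOn r _, fBest_participationOn r _,
    not_objectNeutralOn_fBest r hO⟩
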